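/- Let H be a locally compact second countable group with left Haar measure λ_H, and let ψ : H → ℝ_{>0} be a continuous group homomorphism into the multiplicative group of positive reals such that ∫_H ψ dλ_H < ∞. Then H is compact. -/

import Mathlib

open MeasureTheory

/-! Left invariance of `λ_H` gives `∫ ψ(g x) dx = ∫ ψ`, while multiplicativity gives
`∫ ψ(g x) dx = ψ(g) ∫ ψ`; since `ψ > 0` the integral is nonzero, so `ψ ≡ 1`. Integrability of
the constant `1` means `λ_H` is finite, and a Haar measure on a noncompact locally compact group
has infinite mass. -/

theorem integral_pos_of_forall_pos {α : Type*} [MeasurableSpace α] {μ : Measure α} [NeZero μ]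
    {f : α → ℝ} (hf : Integrable f μ) (hpos : ∀ x, 0 < f x) : 0 < ∫ x, f x ∂μ := by
  rw [integral_pos_iff_support_of_nonneg (fun x => (hpos x).le) hf,
    Function.support_eq_univ fun x => (hpos x).ne', Measure.measure_univ_pos]
  exact NeZero.ne μ

theorem apply_eq_one_of_map_mul_of_integral_ne_zero {G 𝕜 : Type*} [Group G] [MeasurableSpace G]
    [MeasurableMul G] {μ : Measure G} [μ.IsMulLeftInvariant] [RCLike 𝕜] {ψ : G → 𝕜}
    (hψ : ∀ a b, ψ (a * b) = ψ a * ψ b) (hint : ∫ x, ψ x ∂μ ≠ 0) (g : G) : ψ g = 1 := by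
  refine mul_right_cancel₀ hint ?_
  calc ψ g * ∫ x, ψ x ∂μ = ∫ x, ψ (g * x) ∂μ := by simp_rw [hψ g, integral_const_mul]
    _ = 1 * ∫ x, ψ x ∂μ := by rw [integral_mul_left_eq_self, one_mul]

theorem compactSpace_of_isFiniteMeasure_of_isMulLeftInvariant {G : Type*} [Group G]
    [TopologicalSpace G] [IsTopologicalGroup G] [WeaklyLocallyCompactSpace G] [MeasurableSpace G]
    [BorelSpace G] (μ : Measure G) [μ.IsOpenPosMeasure] [μ.IsMulLeftInvariant]
    [IsFiniteMeasure μ] : CompactSpace G := by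
  by_contra hG
  have : NoncompactSpace G := not_compactSpace_iff.mp hG
  exact measure_ne_top μ Set.univ (measure_univ_of_isMulLeftInvariant μ)

theorem lcsc_compact_of_integrable_continuous_hom_general
    {H : Type*} [Group H] [TopologicalSpace H] [IsTopologicalGroup H]
    [LocallyCompactSpace H]
    [MeasurableSpace H] [BorelSpace H]
    (lamH : Measure H) [lamH.IsHaarMeasure]
    (ψ : H → ℝ) (hψpos : ∀ h, 0 < ψ h)
    (hψhom : ∀ a b : H, ψ (a * b) = ψ a * ψ b)
    (hint : Integrable ψ lamH) : CompactSpace H := by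
  have hψ_one : ψ = fun _ => 1 := funext <|
    apply_eq_one_of_map_mul_of_integral_ne_zero hψhom (integral_pos_of_forall_pos hint hψpos).ne'
  rw [hψ_one, integrable_const_iff_isFiniteMeasure one_ne_zero] at hint
  exact compactSpace_of_isFiniteMeasure_of_isMulLeftInvariant lamH

/-- An lcsc group admitting a Haar-integrable continuous homomorphism into
`ℝ_{>0}` is compact. -/
theorem lcsc_compact_of_integrable_continuous_hom
    {H : Type*} [Group H] [TopologicalSpace H] [IsTopologicalGroup H]
    [LocallyCompactSpace H] [SecondCountableTopology H]
    [MeasurableSpace H] [BorelSpace H]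
    (lamH : Measure H) [lamH.IsHaarMeasure]
    (ψ : H → ℝ) (hψcont : Continuous ψ) (hψpos : ∀ h, 0 < ψ h)
    (hψhom : ∀ a b : H, ψ (a * b) = ψ a * ψ b)
    (hint : Integrable ψ lamH) : CompactSpace H :=
  lcsc_compact_of_integrable_continuous_hom_general lamH ψ hψpos hψhom hint
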